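/- For every real α > 2, every rate R > 0 and every distance D > 0, setting T = 2^R − 1, one has ∫_{ℝ²} (T D^α ‖x‖^{−α}) / (1 + T D^α ‖x‖^{−α}) dx = C · T^{2/α} · D², where C = (2π/α) · Γ(2/α) · Γ(1 − 2/α). (Here the integrand is interpreted as 1 at x = 0, a Lebesgue-null point.) -/

import Mathlib

/-!
In polar coordinates the integrand depends only on `r = ‖x‖` and equals `1 / (1 + r^α / K)`,
`K = T D^α`, so the integral is `2π ∫₀^∞ r / (1 + r^α / K) dr`. The substitution
`t = r^α / K` turns this into `(2π / α) K^{2/α} ∫₀^∞ t^{2/α - 1} / (1 + t) dt`, and after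
`t = x / (1 - x)` the last integral is the Beta integral
`B(2/α, 1 - 2/α) = Γ(2/α) Γ(1 - 2/α)`.
-/

open MeasureTheory Real Set

theorem integral_Ioo_rpow_mul_one_sub_rpow {a b : ℝ} (ha : 0 < a) (hb : 0 < b) :
    ∫ x in Ioo (0 : ℝ) 1, x ^ (a - 1) * (1 - x) ^ (b - 1)
      = Gamma a * Gamma b / Gamma (a + b) := by
  have hbeta : Complex.betaIntegral a b
      = ((∫ x in Ioo (0 : ℝ) 1, x ^ (a - 1) * (1 - x) ^ (b - 1) : ℝ) : ℂ) := by
    rw [Complex.betaIntegral, intervalIntegral.integral_of_le zero_le_one,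
      integral_Ioc_eq_integral_Ioo, ← integral_complex_ofReal]
    refine setIntegral_congr_fun measurableSet_Ioo fun x hx => ?_
    push_cast
    rw [Complex.ofReal_cpow hx.1.le, Complex.ofReal_cpow (sub_nonneg.2 hx.2.le)]
    push_cast
    rfl
  apply Complex.ofReal_injective
  rw [← hbeta, Complex.betaIntegral_eq_Gamma_mul_div _ _ (by simpa) (by simpa)]
  push_cast [← Complex.Gamma_ofReal]
  rfl

theorem image_div_one_add_Ioi : (fun t : ℝ => t / (1 + t)) '' Ioi 0 = Ioo 0 1 := by
  ext x
  constructor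
  · rintro ⟨t, ht, rfl⟩
    have ht : 0 < t := ht
    exact ⟨by positivity, (div_lt_one (by positivity)).2 (by linarith)⟩
  · rintro ⟨hx0, hx1⟩
    refine ⟨x / (1 - x), div_pos hx0 (sub_pos.2 hx1), ?_⟩
    have : 1 - x ≠ 0 := (sub_pos.2 hx1).ne'
    field_simp
    ring

theorem integral_Ioi_rpow_div_one_add_rpow {a b : ℝ} (ha : 0 < a) (hb : 0 < b) :
    ∫ t in Ioi (0 : ℝ), t ^ (a - 1) / (1 + t) ^ (a + b)
      = Gamma a * Gamma b / Gamma (a + b) := by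
  have hderiv : ∀ t ∈ Ioi (0 : ℝ),
      HasDerivWithinAt (fun t : ℝ => t / (1 + t)) ((1 + t) ^ 2)⁻¹ (Ioi 0) t := by
    intro t (ht : 0 < t)
    have h1t : 1 + t ≠ 0 := by positivity
    refine (((hasDerivAt_id' t).div ((hasDerivAt_id' t).const_add 1) h1t).hasDerivWithinAt
      ).congr_deriv ?_
    field_simp
    ring
  have hinj : InjOn (fun t : ℝ => t / (1 + t)) (Ioi 0) := by
    intro s (hs : 0 < s) t (ht : 0 < t) h
    rw [div_eq_div_iff (by positivity) (by positivity)] at h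
    linarith
  rw [← integral_Ioo_rpow_mul_one_sub_rpow ha hb, ← image_div_one_add_Ioi,
    integral_image_eq_integral_abs_deriv_smul measurableSet_Ioi hderiv hinj]
  refine setIntegral_congr_fun measurableSet_Ioi fun t (ht : 0 < t) => ?_
  have h1t : 0 < 1 + t := by positivity
  have hsub : 1 - t / (1 + t) = (1 + t)⁻¹ := by field_simp; ring
  rw [hsub, div_rpow ht.le h1t.le, inv_rpow h1t.le, abs_of_pos (by positivity), smul_eq_mul]
  simp only [div_eq_mul_inv, ← rpow_natCast, ← rpow_neg h1t.le]
  rw [show -(a + b) = -((2 : ℕ) : ℝ) + -(a - 1) + -(b - 1) by push_cast; ring,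
    rpow_add h1t, rpow_add h1t]
  ring

theorem integral_Ioi_rpow_div_one_add_mul (a : ℝ) {c : ℝ} (hc : 0 < c) :
    ∫ t in Ioi (0 : ℝ), t ^ (a - 1) / (1 + c * t)
      = c ^ (-a) * ∫ t in Ioi (0 : ℝ), t ^ (a - 1) / (1 + t) := by
  have h := integral_comp_mul_left_Ioi (fun t : ℝ => t ^ (a - 1) / (1 + t)) 0 hc
  rw [mul_zero, smul_eq_mul] at h
  calc _ = ∫ t in Ioi (0 : ℝ), c ^ (1 - a) * ((c * t) ^ (a - 1) / (1 + c * t)) := by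
        refine setIntegral_congr_fun measurableSet_Ioi fun t (ht : 0 < t) => ?_
        rw [mul_rpow hc.le ht.le, mul_div_assoc, ← mul_assoc, ← rpow_add hc,
          show 1 - a + (a - 1) = 0 by ring, rpow_zero, one_mul]
    _ = c ^ (1 - a) * (c⁻¹ * ∫ t in Ioi (0 : ℝ), t ^ (a - 1) / (1 + t)) := by
        rw [integral_const_mul, h]
    _ = _ := by
        rw [← mul_assoc, ← rpow_neg_one, ← rpow_add hc, show 1 - a + -1 = -a by ring]

theorem integral_Ioi_rpow_div_one_add_mul_rpow {s p c : ℝ} (hs : 0 < s) (hsp : s < p)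
    (hc : 0 < c) :
    ∫ y in Ioi (0 : ℝ), y ^ (s - 1) / (1 + c * y ^ p)
      = c ^ (-(s / p)) / p * (Gamma (s / p) * Gamma (1 - s / p)) := by
  have hp : 0 < p := hs.trans hsp
  have h0 : 0 < s / p := div_pos hs hp
  have h1 : 0 < 1 - s / p := by rw [sub_pos, div_lt_one hp]; exact hsp
  have hsubst := integral_comp_rpow_Ioi_of_pos
    (g := fun t => p⁻¹ * (t ^ (s / p - 1) / (1 + c * t))) hp
  have hbeta := integral_Ioi_rpow_div_one_add_rpow h0 h1
  simp only [add_sub_cancel, Real.rpow_one, Gamma_one, div_one] at hbeta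
  rw [integral_const_mul, integral_Ioi_rpow_div_one_add_mul _ hc, hbeta] at hsubst
  calc _ = ∫ x in Ioi (0 : ℝ),
        (p * x ^ (p - 1)) • (p⁻¹ * ((x ^ p) ^ (s / p - 1) / (1 + c * x ^ p))) := by
        refine setIntegral_congr_fun measurableSet_Ioi fun x (hx : 0 < x) => ?_
        rw [← rpow_mul hx.le, mul_sub, mul_div_cancel₀ _ hp.ne', mul_one, smul_eq_mul,
          mul_mul_mul_comm, mul_inv_cancel₀ hp.ne', one_mul, mul_div_assoc', ← rpow_add hx]
        ring_nf
    _ = _ := by rw [hsubst]; ring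

theorem integral_fun_norm_euclideanSpace_fin_two (f : ℝ → ℝ) :
    ∫ x : EuclideanSpace ℝ (Fin 2), f ‖x‖ = 2 * π * ∫ y in Ioi (0 : ℝ), y * f y := by
  rw [integral_fun_norm_addHaar volume f, finrank_euclideanSpace_fin, measureReal_def,
    EuclideanSpace.volume_ball_fin_two]
  simp [pi_nonneg, mul_assoc]

open scoped Classical in
/-- For `α > 2`, rate `R > 0`, distance `D > 0` and `T = 2^R − 1`, the planar integral of
`(T D^α ‖x‖^{−α})/(1 + T D^α ‖x‖^{−α})` (reading the integrand as `1` at the null point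
`x = 0`) equals `C T^{2/α} D²` with `C = (2π/α) Γ(2/α) Γ(1 − 2/α)`. -/
theorem outage_exponent_integral (α R D : ℝ) (hα : 2 < α) (hR : 0 < R) (hD : 0 < D) :
    ∫ x : EuclideanSpace ℝ (Fin 2),
        (if x = 0 then (1 : ℝ)
         else ((2 ^ R - 1) * D ^ α * ‖x‖ ^ (-α)) / (1 + (2 ^ R - 1) * D ^ α * ‖x‖ ^ (-α)))
      = (2 * Real.pi / α) * Real.Gamma (2 / α) * Real.Gamma (1 - 2 / α)
          * (2 ^ R - 1) ^ (2 / α) * D ^ 2 := by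
  have hT : 0 < (2 : ℝ) ^ R - 1 := sub_pos.2 (one_lt_rpow one_lt_two hR)
  have hDα : 0 < D ^ α := rpow_pos_of_pos hD α
  set K := (2 ^ R - 1) * D ^ α
  have hK : 0 < K := mul_pos hT hDα
  have hpolar := integral_fun_norm_euclideanSpace_fin_two
    fun y => if y = 0 then 1 else K * y ^ (-α) / (1 + K * y ^ (-α))
  simp only [norm_eq_zero] at hpolar
  have hradial :
      ∫ y in Ioi (0 : ℝ), y * (if y = 0 then 1 else K * y ^ (-α) / (1 + K * y ^ (-α)))
        = ∫ y in Ioi (0 : ℝ), y ^ ((2 : ℝ) - 1) / (1 + K⁻¹ * y ^ α) := by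
    refine setIntegral_congr_fun measurableSet_Ioi fun y (hy : 0 < y) => ?_
    have hyα : 0 < y ^ α := rpow_pos_of_pos hy α
    rw [if_neg hy.ne', rpow_neg hy.le, show (2 : ℝ) - 1 = 1 by norm_num, rpow_one]
    field_simp
    ring
  have hK2 : K ^ (2 / α) = (2 ^ R - 1) ^ (2 / α) * D ^ 2 := by
    rw [mul_rpow hT.le hDα.le, ← rpow_mul hD.le, mul_div_cancel₀ _ (by positivity), rpow_two]
  rw [hpolar, hradial, integral_Ioi_rpow_div_one_add_mul_rpow two_pos hα (inv_pos.2 hK),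
    inv_rpow hK.le, rpow_neg hK.le, inv_inv, hK2]
  ring
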